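/- Let Ω ⊂ ℝ^d be a nonempty bounded open set, Y a normed vector space, A : L²(Ω) → Y a (possibly nonlinear) map, and D : Y × Y → [0, ∞) a functional such that: (i) the map (f, g') ↦ D(A(f), g') is sequentially lower semicontinuous with respect to L²(Ω)-convergence in f and norm convergence in g'; (ii) for each y ∈ Y the map g' ↦ D(y, g') is continuous. Let φ : [0, ∞) → [0, ∞) be continuous, monotonically increasing, with φ(t) → ∞ as t → ∞; fix α > 0 and n ≥ 1, and write T(θ, g') := D(A(f_θ), g') + α·φ(c(θ)) for θ ∈ Θ_n. Let g ∈ Y and (g_k) ⊆ Y with g_k → g, and for each k let θ_k ∈ Θ_n be a minimizer of T(·, g_k) over Θ_n. Then there exist a subsequence (θ_{k_ℓ}) and θ* ∈ Θ_n such that θ_{k_ℓ} → θ* in (ℝ × ℝ^d × ℝ)^n, hence f_{θ_{k_ℓ}} → f_{θ*} in L²(Ω), and θ* is a minimizer of T(·, g) over Θ_n. -/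

import Mathlib

open MeasureTheory Filter Topology Bornology

noncomputable section

/-- Parameter of a single neuron: `(a, b, c)`. -/
abbrev NNParam (d : ℕ) : Type := ℝ × (Fin d → ℝ) × ℝ

/-- ℓ¹ norm on `ℝ^d`. -/
def l1 {d : ℕ} (b : Fin d → ℝ) : ℝ := ∑ i, |b i|

/-- The two-layer ReLU network with parameters `θ`. -/
def netFun {d n : ℕ} (θ : Fin n → NNParam d) : (Fin d → ℝ) → ℝ :=
  fun x => (1 / (n : ℝ)) * ∑ j, (θ j).1 * max (∑ i, (θ j).2.1 i * x i + (θ j).2.2) 0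

theorem netFun_continuous {d n : ℕ} (θ : Fin n → NNParam d) : Continuous (netFun θ) := by
  unfold netFun
  refine continuous_const.mul (continuous_finset_sum _ fun j _ => continuous_const.mul ?_)
  exact ((continuous_finset_sum _ fun i _ =>
    (continuous_const.mul (continuous_apply i))).add continuous_const).max continuous_const

/-- Membership of a single-neuron parameter in the set `M_r`. -/
def memMr {d : ℕ} (r : ℝ) (p : NNParam d) : Prop :=
  |p.1| ≤ r ∧ l1 p.2.1 + |p.2.2| = 1

theorem memLp_net {d n : ℕ} {Ω : Set (Fin d → ℝ)} (hΩo : IsOpen Ω) (hΩb : IsBounded Ω)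
    (θ : Fin n → NNParam d) : MemLp (netFun θ) 2 (volume.restrict Ω) := by
  have hc := netFun_continuous θ
  obtain ⟨C, hC⟩ := hΩb.isCompact_closure.exists_bound_of_continuousOn hc.continuousOn
  haveI : Fact (volume Ω < ⊤) := ⟨hΩb.measure_lt_top⟩
  refine MemLp.of_bound (hc.aestronglyMeasurable.restrict) C ?_
  filter_upwards [ae_restrict_mem hΩo.measurableSet] with x hx
  exact hC x (subset_closure hx)

/-- The two-layer ReLU network with parameters `θ`, as an element of `L²(Ω)`. -/
def netLp {d n : ℕ} (Ω : Set (Fin d → ℝ)) (hΩo : IsOpen Ω) (hΩb : IsBounded Ω)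
    (θ : Fin n → NNParam d) : Lp ℝ 2 (volume.restrict Ω) :=
  (memLp_net hΩo hΩb θ).toLp (netFun θ)

/-- The class `X_{n,r}` of width-`n` networks with parameters in `M_r`, inside `L²(Ω)`. -/
def Xlp {d : ℕ} (Ω : Set (Fin d → ℝ)) (hΩo : IsOpen Ω) (hΩb : IsBounded Ω)
    (n : ℕ) (r : ℝ) : Set (Lp ℝ 2 (volume.restrict Ω)) :=
  {f | ∃ θ : Fin n → NNParam d, (∀ j, memMr r (θ j)) ∧ f = netLp Ω hΩo hΩb θ}
/-- The parameter domain `Θ_n`: all inner-layer parameters lie on the ℓ¹ unit sphere. -/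
def ΘCond {d n : ℕ} (θ : Fin n → NNParam d) : Prop :=
  ∀ j, l1 (θ j).2.1 + |(θ j).2.2| = 1

/-- The path-norm functional `c(θ) = (1/n) ∑_j |a_j| (‖b_j‖₁ + |c_j|)`. -/
def pathNorm {d n : ℕ} (θ : Fin n → NNParam d) : ℝ :=
  (1 / (n : ℝ)) * ∑ j, |(θ j).1| * (l1 (θ j).2.1 + |(θ j).2.2|)

/-! Comparing a minimizer with the zero network `θ₀` gives
`α φ(c(θ_k)) ≤ D(A f_{θ₀}, g_k) + α φ(0)`, which is bounded because `g_k → g`; as `φ → ∞`, the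
path norms `c(θ_k)` are bounded. On `Θ_n` the path norm is the mean of the `|a_j|` and the inner
weights lie on the ℓ¹ unit sphere, so the `θ_k` stay in a compact set and a subsequence converges.
Since `(θ, x) ↦ f_θ(x)` is jointly continuous, `f_θ` depends continuously on `θ` uniformly on the
compact set `closure Ω`, hence in `L²(Ω)`. Lower semicontinuity of the data term and continuity of
the penalty then carry minimality over to the limit. -/

theorem Filter.Tendsto.bddAbove_range_of_bddAbove_range_comp {ι α β : Type*} [LinearOrder α]
    [Nonempty α] [Preorder β] [NoTopOrder β] {φ : α → β} (hφ : Tendsto φ atTop atTop)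
    {c : ι → α} (h : BddAbove (Set.range (φ ∘ c))) : BddAbove (Set.range c) := by
  obtain ⟨B, hB⟩ := h
  obtain ⟨t₀, ht₀⟩ := eventually_atTop.mp (hφ.eventually_gt_atTop B)
  refine ⟨t₀, ?_⟩
  rintro _ ⟨k, rfl⟩
  by_contra! hk
  exact (ht₀ _ hk.le).not_ge (hB ⟨k, rfl⟩)

theorem add_le_of_le_liminf_of_tendsto {ι : Type*} {l : Filter ι} [l.NeBot] {u r v : ι → ℝ}
    {a ρ b : ℝ} (hu : IsBoundedUnder (· ≥ ·) l u) (ha : a ≤ liminf u l)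
    (hr : Tendsto r l (𝓝 ρ)) (hv : Tendsto v l (𝓝 b)) (huv : ∀ᶠ i in l, u i + r i ≤ v i) :
    a + ρ ≤ b := by
  have hvr := hv.sub hr
  have : liminf u l ≤ b - ρ :=
    (liminf_le_liminf (huv.mono fun i => le_sub_iff_add_le.mpr) hu
      hvr.isBoundedUnder_le.isCoboundedUnder_ge).trans_eq hvr.liminf_eq
  linarith

theorem MeasureTheory.tendsto_toLp_of_tendstoUniformlyOn {α E ι : Type*} [MeasurableSpace α]
    {μ : Measure α} [IsFiniteMeasure μ] [NormedAddCommGroup E] {p : ENNReal} [Fact (1 ≤ p)]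
    {l : Filter ι} {F : ι → α → E} {f : α → E} {s : Set α} (hF : ∀ i, MemLp (F i) p μ)
    (hf : MemLp f p μ) (hs : ∀ᵐ x ∂μ, x ∈ s) (h : TendstoUniformlyOn F f l s) :
    Tendsto (fun i => (hF i).toLp (F i)) l (𝓝 (hf.toLp f)) := by
  set C : ℝ := (measureUnivNNReal μ : ℝ) ^ p.toReal⁻¹
  rw [Metric.tendsto_nhds]
  intro ε hε
  have hδ : 0 < ε / (C + 1) := by positivity
  filter_upwards [Metric.tendstoUniformlyOn_iff.mp h _ hδ] with i hi
  have hbound : ∀ᵐ x ∂μ, ‖((hF i).toLp (F i) - hf.toLp f : Lp E p μ) x‖ ≤ ε / (C + 1) := by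
    filter_upwards [hs, Lp.coeFn_sub ((hF i).toLp (F i)) (hf.toLp f), (hF i).coeFn_toLp,
      hf.coeFn_toLp] with x hx hsub hFi hfx
    rw [hsub, Pi.sub_apply, hFi, hfx, ← dist_eq_norm, dist_comm]
    exact (hi x hx).le
  calc dist ((hF i).toLp (F i)) (hf.toLp f) ≤ C * (ε / (C + 1)) :=
        (dist_eq_norm _ _).trans_le (Lp.norm_le_of_ae_bound hδ.le hbound)
    _ < ε := by
        rw [mul_div_assoc', div_lt_iff₀ (by positivity)]
        nlinarith

lemma l1_nonneg {d : ℕ} (b : Fin d → ℝ) : 0 ≤ l1 b :=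
  Finset.sum_nonneg fun _ _ => abs_nonneg _

lemma norm_le_l1 {d : ℕ} (b : Fin d → ℝ) : ‖b‖ ≤ l1 b :=
  (pi_norm_le_iff_of_nonneg (l1_nonneg b)).mpr fun i =>
    Finset.single_le_sum (f := fun i => |b i|) (fun _ _ => abs_nonneg _) (Finset.mem_univ i)

lemma continuous_pathNorm {d n : ℕ} : Continuous (pathNorm (d := d) (n := n)) := by
  unfold pathNorm l1; fun_prop

lemma isClosed_setOf_ΘCond {d n : ℕ} : IsClosed {θ : Fin n → NNParam d | ΘCond θ} := by
  simp only [ΘCond, Set.ofPred_forall]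
  exact isClosed_iInter fun j => isClosed_eq (by unfold l1; fun_prop) continuous_const

lemma pathNorm_eq_of_ΘCond {d n : ℕ} {θ : Fin n → NNParam d} (hθ : ΘCond θ) :
    pathNorm θ = (1 / (n : ℝ)) * ∑ j, |(θ j).1| := by
  simp only [pathNorm]
  exact congrArg _ (Finset.sum_congr rfl fun j _ => by rw [hθ j, mul_one])

lemma abs_fst_le_mul_pathNorm {d n : ℕ} {θ : Fin n → NNParam d} (hθ : ΘCond θ) (j : Fin n) :
    |(θ j).1| ≤ n * pathNorm θ := by
  have hn : (n : ℝ) ≠ 0 := Nat.cast_ne_zero.mpr (Fin.pos j).ne'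
  rw [pathNorm_eq_of_ΘCond hθ, ← mul_assoc, mul_one_div_cancel hn, one_mul]
  exact Finset.single_le_sum (f := fun i => |(θ i).1|) (fun _ _ => abs_nonneg _)
    (Finset.mem_univ j)

lemma norm_le_of_ΘCond {d n : ℕ} {θ : Fin n → NNParam d} (hθ : ΘCond θ) :
    ‖θ‖ ≤ max (n * pathNorm θ) 1 := by
  refine (pi_norm_le_iff_of_nonneg (le_max_of_le_right zero_le_one)).mpr fun j => ?_
  have hb : ‖(θ j).2.1‖ ≤ 1 := by
    linarith [norm_le_l1 (θ j).2.1, hθ j, abs_nonneg (θ j).2.2]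
  have hc : |(θ j).2.2| ≤ 1 := by linarith [l1_nonneg (θ j).2.1, hθ j]
  simp only [Prod.norm_def, Real.norm_eq_abs]
  exact max_le (le_max_of_le_left (abs_fst_le_mul_pathNorm hθ j))
    (le_max_of_le_right (max_le hb hc))

theorem isCompact_setOf_ΘCond_pathNorm_le {d n : ℕ} (t : ℝ) :
    IsCompact {θ : Fin n → NNParam d | ΘCond θ ∧ pathNorm θ ≤ t} := by
  refine Metric.isCompact_of_isClosed_isBounded
    (isClosed_setOf_ΘCond.inter (isClosed_le continuous_pathNorm continuous_const)) ?_
  refine isBounded_iff_forall_norm_le.mpr ⟨max (n * t) 1, fun θ ⟨hθ, ht⟩ => ?_⟩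
  exact (norm_le_of_ΘCond hθ).trans (max_le_max_right _ (by gcongr))

theorem continuous_netLp {d n : ℕ} {Ω : Set (Fin d → ℝ)} (hΩo : IsOpen Ω) (hΩb : IsBounded Ω) :
    Continuous (netLp (n := n) Ω hΩo hΩb) := by
  have : IsFiniteMeasure (volume.restrict Ω) := isFiniteMeasure_restrict.mpr hΩb.measure_lt_top.ne
  have hcurry : Continuous fun θ : Fin n → NNParam d =>
      (⟨netFun θ, netFun_continuous θ⟩ : C(Fin d → ℝ, ℝ)) :=
    ContinuousMap.continuous_of_continuous_uncurry _
      (show Continuous (Function.uncurry netFun) by unfold netFun; fun_prop)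
  refine continuous_iff_continuousAt.mpr fun θ => tendsto_toLp_of_tendstoUniformlyOn _ _
    (ae_restrict_of_forall_mem hΩo.measurableSet fun _ hx => subset_closure hx)
    (ContinuousMap.tendsto_iff_forall_isCompact_tendstoUniformlyOn.mp (hcurry.tendsto θ) _
      hΩb.isCompact_closure)

theorem tikhonov_minimizers_stable_general
    {d : ℕ} (Ω : Set (Fin d → ℝ)) (hΩo : IsOpen Ω)
    (hΩb : IsBounded Ω)
    {Y : Type*} [NormedAddCommGroup Y] [NormedSpace ℝ Y]
    (A : Lp ℝ 2 (volume.restrict Ω) → Y)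
    (D : Y → Y → ℝ) (hD0 : ∀ y y', 0 ≤ D y y')
    (hlsc : ∀ (F : ℕ → Lp ℝ 2 (volume.restrict Ω)) (f : Lp ℝ 2 (volume.restrict Ω))
        (G : ℕ → Y) (g' : Y),
      Tendsto F atTop (nhds f) → Tendsto G atTop (nhds g') →
        D (A f) g' ≤ liminf (fun k => D (A (F k)) (G k)) atTop)
    (hDcont : ∀ y : Y, Continuous (fun g' => D y g'))
    (φ : ℝ → ℝ) (hφc : Continuous φ)
    (hφtop : Tendsto φ atTop atTop)
    (α : ℝ) (hα : 0 < α) (n : ℕ)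
    (g : Y) (gk : ℕ → Y) (hgk : Tendsto gk atTop (nhds g))
    (θk : ℕ → (Fin n → NNParam d)) (hθk : ∀ k, ΘCond (θk k))
    (hmin : ∀ k, ∀ θ : Fin n → NNParam d, ΘCond θ →
      D (A (netLp Ω hΩo hΩb (θk k))) (gk k) + α * φ (pathNorm (θk k)) ≤
        D (A (netLp Ω hΩo hΩb θ)) (gk k) + α * φ (pathNorm θ)) :
    ∃ (ψ : ℕ → ℕ) (θs : Fin n → NNParam d), StrictMono ψ ∧ ΘCond θs ∧
      Tendsto (fun ℓ => θk (ψ ℓ)) atTop (nhds θs) ∧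
      Tendsto (fun ℓ => netLp Ω hΩo hΩb (θk (ψ ℓ))) atTop (nhds (netLp Ω hΩo hΩb θs)) ∧
      ∀ θ : Fin n → NNParam d, ΘCond θ →
        D (A (netLp Ω hΩo hΩb θs)) g + α * φ (pathNorm θs) ≤
          D (A (netLp Ω hΩo hΩb θ)) g + α * φ (pathNorm θ) := by
  set θ₀ : Fin n → NNParam d := fun _ => (0, 0, 1)
  have hθ₀ : ΘCond θ₀ := fun j => by simp [θ₀, l1]
  obtain ⟨t, ht⟩ : BddAbove (Set.range fun k => pathNorm (θk k)) := by
    refine hφtop.bddAbove_range_of_bddAbove_range_comp ?_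
    obtain ⟨M, hM⟩ := (((hDcont (A (netLp Ω hΩo hΩb θ₀))).tendsto g).comp hgk).bddAbove_range
    refine ⟨(M + α * φ 0) / α, ?_⟩
    rintro _ ⟨k, rfl⟩
    have hk₀ := hmin k θ₀ hθ₀
    have hM₀ : D (A (netLp Ω hΩo hΩb θ₀)) (gk k) ≤ M := hM ⟨k, rfl⟩
    rw [show pathNorm θ₀ = 0 by simp [pathNorm, θ₀]] at hk₀
    rw [Function.comp_apply, le_div_iff₀ hα]
    linarith [hD0 (A (netLp Ω hΩo hΩb (θk k))) (gk k)]
  obtain ⟨θs, ⟨hθs, -⟩, ψ, hψ, hconv⟩ :=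
    (isCompact_setOf_ΘCond_pathNorm_le t).tendsto_subseq fun k => ⟨hθk k, ht ⟨k, rfl⟩⟩
  have hnet := ((continuous_netLp hΩo hΩb).tendsto θs).comp hconv
  refine ⟨ψ, θs, hψ, hθs, hconv, hnet, fun θ hθ => ?_⟩
  have hgψ := hgk.comp hψ.tendsto_atTop
  exact add_le_of_le_liminf_of_tendsto (isBoundedUnder_of ⟨0, fun ℓ => hD0 _ _⟩)
    (hlsc _ _ _ _ hnet hgψ)
    (tendsto_const_nhds.mul ((hφc.tendsto _).comp ((continuous_pathNorm.tendsto θs).comp hconv)))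
    ((((hDcont _).tendsto g).comp hgψ).add tendsto_const_nhds)
    (.of_forall fun ℓ => hmin (ψ ℓ) θ hθ)

/-- Stability of Tikhonov minimizers: if `(f, g') ↦ D(A f, g')` is
nonnegative and jointly sequentially lower semicontinuous (w.r.t. `L²(Ω)`-convergence in
`f` and norm convergence in `g'`), `g' ↦ D(y, g')` is continuous for each `y`, `φ` is
continuous, monotone, nonnegative and tends to `∞`, `g_k → g`, and each `θ_k` minimizes
`T(·, g_k)` over `Θ_n`, then some subsequence `θ_{k_ℓ}` converges to a minimizer `θ*` of
`T(·, g)` over `Θ_n`, and the corresponding networks converge in `L²(Ω)`. -/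
theorem tikhonov_minimizers_stable
    {d : ℕ} (hd : 1 ≤ d) (Ω : Set (Fin d → ℝ)) (hne : Ω.Nonempty) (hΩo : IsOpen Ω)
    (hΩb : IsBounded Ω)
    {Y : Type*} [NormedAddCommGroup Y] [NormedSpace ℝ Y]
    (A : Lp ℝ 2 (volume.restrict Ω) → Y)
    (D : Y → Y → ℝ) (hD0 : ∀ y y', 0 ≤ D y y')
    (hlsc : ∀ (F : ℕ → Lp ℝ 2 (volume.restrict Ω)) (f : Lp ℝ 2 (volume.restrict Ω))
        (G : ℕ → Y) (g' : Y),
      Tendsto F atTop (nhds f) → Tendsto G atTop (nhds g') →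
        D (A f) g' ≤ liminf (fun k => D (A (F k)) (G k)) atTop)
    (hDcont : ∀ y : Y, Continuous (fun g' => D y g'))
    (φ : ℝ → ℝ) (hφc : Continuous φ) (hφm : Monotone φ) (hφ0 : ∀ t, 0 ≤ φ t)
    (hφtop : Tendsto φ atTop atTop)
    (α : ℝ) (hα : 0 < α) (n : ℕ) (hn : 1 ≤ n)
    (g : Y) (gk : ℕ → Y) (hgk : Tendsto gk atTop (nhds g))
    (θk : ℕ → (Fin n → NNParam d)) (hθk : ∀ k, ΘCond (θk k))
    (hmin : ∀ k, ∀ θ : Fin n → NNParam d, ΘCond θ →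
      D (A (netLp Ω hΩo hΩb (θk k))) (gk k) + α * φ (pathNorm (θk k)) ≤
        D (A (netLp Ω hΩo hΩb θ)) (gk k) + α * φ (pathNorm θ)) :
    ∃ (ψ : ℕ → ℕ) (θs : Fin n → NNParam d), StrictMono ψ ∧ ΘCond θs ∧
      Tendsto (fun ℓ => θk (ψ ℓ)) atTop (nhds θs) ∧
      Tendsto (fun ℓ => netLp Ω hΩo hΩb (θk (ψ ℓ))) atTop (nhds (netLp Ω hΩo hΩb θs)) ∧
      ∀ θ : Fin n → NNParam d, ΘCond θ →
        D (A (netLp Ω hΩo hΩb θs)) g + α * φ (pathNorm θs) ≤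
          D (A (netLp Ω hΩo hΩb θ)) g + α * φ (pathNorm θ) :=
  tikhonov_minimizers_stable_general Ω hΩo hΩb A D hD0 hlsc hDcont φ hφc hφtop α hα n g gk hgk θk
    hθk hmin

end
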